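/- Let μ₁ ∈ ℕ^t be nonzero, C° ⊆ ℝ^t a convex cone with μ₁ at positive distance d from C°, Γ ⊂ ℕ^t finite, and h ∈ K[[z₁,...,z_t]] a power series with support in Γ + C°. For each minimal representative λ of a class modulo ℤμ₁, define a_λ(z) = Σ_{n≥0} h_{λ+nμ₁} zⁿ where h_κ denotes the coefficient of z^κ in h. Then each a_λ(z) is a polynomial. -/

import Mathlib

open Finset

/-- The natural inclusion of `ℕ^t` into Euclidean space `ℝ^t`. -/
def toR {t : ℕ} (x : Fin t → ℕ) : EuclideanSpace ℝ (Fin t) := WithLp.toLp 2 (fun i => (x i : ℝ))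

/-- `C` is a convex cone. -/
def IsConvexCone {t : ℕ} (C : Set (EuclideanSpace ℝ (Fin t))) : Prop :=
  (∀ x ∈ C, ∀ y ∈ C, x + y ∈ C) ∧ ∀ c : ℝ, 0 ≤ c → ∀ x ∈ C, c • x ∈ C

theorem stmt10 {K : Type*} [Field K] {t : ℕ} (μ : Fin t → ℕ) (hμ : μ ≠ 0)
    (C : Set (EuclideanSpace ℝ (Fin t))) (hC : IsConvexCone C)
    -- `μ` is at positive distance from `C°`
    (hd : 0 < Metric.infDist (toR μ) C)
    (Γ : Finset (Fin t → ℕ)) (h : MvPowerSeries (Fin t) K)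
    -- the support of `h` is contained in `Γ + C°`
    (hsupp : ∀ d : Fin t →₀ ℕ, MvPowerSeries.coeff d h ≠ 0 →
      ∃ γ ∈ Γ, ∃ c ∈ C, toR (⇑d) = toR γ + c)
    (lam : Fin t → ℕ)
    -- `lam` is a minimal representative of its class modulo `ℤ·μ`
    (hlam : ¬ ∀ i, μ i ≤ lam i) :
    ∃ p : Polynomial K, (p : PowerSeries K) =
      PowerSeries.mk (fun n : ℕ =>
        MvPowerSeries.coeff (Finsupp.equivFunOnFinite.symm (lam + n • μ)) h) := by
  set f : ℕ → K := fun n =>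
    MvPowerSeries.coeff (Finsupp.equivFunOnFinite.symm (lam + n • μ)) h with hf
  set d := Metric.infDist (toR μ) C with hdd
  obtain ⟨B, hB⟩ := (Γ.image fun γ => ‖toR γ - toR lam‖).exists_le
  obtain ⟨N, hN⟩ := exists_nat_gt (B / d)
  have hzero : ∀ n, N + 1 ≤ n → f n = 0 := by
    intro n hn
    by_contra hne
    obtain ⟨γ, hγ, c, hc, hEq⟩ := hsupp _ hne
    have hn0 : (0:ℝ) < n := by
      have : 1 ≤ n := le_trans (Nat.le_add_left 1 N) hn
      exact_mod_cast this
    have key : toR lam + (n:ℝ) • toR μ = toR γ + c := by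
      rw [← hEq]
      ext i
      have hi : (Finsupp.equivFunOnFinite.symm (lam + n • μ)) i = lam i + n * μ i := by
        simp [Finsupp.equivFunOnFinite, Pi.smul_apply]; rfl
      show (lam i : ℝ) + (n : ℝ) * (μ i : ℝ) = ((Finsupp.equivFunOnFinite.symm (lam + n • μ)) i : ℝ)
      rw [hi]; push_cast; ring
    have h3 : (n:ℝ) • toR μ - c = toR γ - toR lam := by
      rw [sub_eq_sub_iff_add_eq_add, add_comm _ (toR lam)]
      exact key
    have h1 : toR μ - (n:ℝ)⁻¹ • c = (n:ℝ)⁻¹ • (toR γ - toR lam) := by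
      rw [← h3, smul_sub, smul_smul, inv_mul_cancel₀ (ne_of_gt hn0), one_smul]
    have hmem : (n:ℝ)⁻¹ • c ∈ C := hC.2 _ (by positivity) c hc
    have h4 : d ≤ ‖toR μ - (n:ℝ)⁻¹ • c‖ := by
      rw [hdd]
      calc Metric.infDist (toR μ) C ≤ dist (toR μ) ((n:ℝ)⁻¹ • c) :=
            Metric.infDist_le_dist_of_mem hmem
        _ = ‖toR μ - (n:ℝ)⁻¹ • c‖ := dist_eq_norm _ _
    have h5 : ‖toR μ - (n:ℝ)⁻¹ • c‖ ≤ (n:ℝ)⁻¹ * B := by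
      rw [h1, norm_smul, norm_inv, Real.norm_natCast]
      have hγB : ‖toR γ - toR lam‖ ≤ B :=
        hB _ (Finset.mem_image_of_mem _ hγ)
      exact mul_le_mul_of_nonneg_left hγB (by positivity)
    have hnN : B / d < (n:ℝ) := lt_of_lt_of_le hN (by exact_mod_cast le_trans (Nat.le_succ N) hn)
    have hBnd : B < (n:ℝ) * d := (div_lt_iff₀ hd).mp hnN
    have : (n:ℝ)⁻¹ * B < d := by
      rw [inv_mul_lt_iff₀ hn0]
      linarith [hBnd]
    linarith [h4, h5]
  refine ⟨∑ n ∈ Finset.range (N + 1), Polynomial.monomial n (f n), ?_⟩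
  ext m
  rw [Polynomial.coeff_coe, PowerSeries.coeff_mk, Polynomial.finset_sum_coeff]
  simp only [Polynomial.coeff_monomial]
  rw [Finset.sum_ite_eq' (Finset.range (N + 1)) m f]
  by_cases hm : m ∈ Finset.range (N + 1)
  · simp [hm]
  · simp only [hm, if_false]
    have hm' : N + 1 ≤ m := Nat.le_of_not_lt (by simpa using hm)
    exact (hzero m hm').symm
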